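/- Let K be an algebraically closed field, let 𝔞 ⊆ K[T_1,…,T_r] be the ideal generated by polynomials g_1,…,g_s, and let J ⊆ {1,…,r}. Let 𝔞_J ⊆ K[T_1,…,T_r] be the ideal generated by g_1(T_J),…,g_s(T_J), where g(T_J) denotes the result of substituting 0 for every variable T_i with i ∉ J. Then J is an 𝔞-face, i.e., there exists z ∈ K^r with g_l(z) = 0 for all l = 1,…,s, z_i ≠ 0 for all i ∈ J and z_i = 0 for all i ∉ J, if and only if 1 ∉ 𝔞_J : (∏_{i∈J} T_i)^∞. -/

import Mathlib

open MvPolynomial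

/-!
With `h = ∏_{i ∈ J} T_i`, we have `1 ∈ 𝔞_J : h^∞` iff `h ∈ √𝔞_J`, which by the Nullstellensatz
means that `h` vanishes on `V(𝔞_J)`. A point `w ∈ V(𝔞_J)` with `h(w) ≠ 0` becomes a point of
`V(𝔞) ∩ T_J` once its coordinates outside `J` are set to `0`, and every point of `V(𝔞) ∩ T_J`
is such a `w` itself.
-/

namespace MvPolynomial

theorem eval_aeval_ite_X {R σ : Type*} [CommSemiring R] [DecidableEq σ] (J : Finset σ)
    (z : σ → R) (p : MvPolynomial σ R) :
    eval z (aeval (fun i => if i ∈ J then (X i : MvPolynomial σ R) else 0) p) =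
      eval (fun i => if i ∈ J then z i else 0) p := by
  rw [aeval_eq_bind₁]
  exact (eval₂Hom_bind₁ _ _ _ _).trans (by congr; ext i; split_ifs <;> simp)

theorem exists_mem_zeroLocus_eval_ne_zero_iff {K σ : Type*} [Field K] [IsAlgClosed K] [Finite σ]
    (I : Ideal (MvPolynomial σ K)) (h : MvPolynomial σ K) :
    (∃ z ∈ zeroLocus K I, eval z h ≠ 0) ↔ h ∉ I.radical := by
  rw [← vanishingIdeal_zeroLocus_eq_radical (K := K), mem_vanishingIdeal_iff]
  simp

theorem exists_eval_eq_zero_with_support_iff {R σ ι : Type*} [CommSemiring R]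
    [NoZeroDivisors R] [Nontrivial R] [DecidableEq σ] (g : ι → MvPolynomial σ R) (J : Finset σ) :
    (∃ z : σ → R, (∀ l, eval z (g l) = 0) ∧ ∀ i, z i ≠ 0 ↔ i ∈ J) ↔
      ∃ w : σ → R, (∀ l, eval w (aeval (fun i => if i ∈ J then X i else 0) (g l)) = 0) ∧
        eval w (∏ i ∈ J, X i) ≠ 0 := by
  simp only [eval_aeval_ite_X, map_prod, eval_X, ne_eq, Finset.prod_eq_zero_iff, not_exists,
    not_and]
  constructor
  · rintro ⟨z, hz, hzJ⟩
    have hz_restrict : (fun i => if i ∈ J then z i else 0) = z := by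
      ext i; split_ifs with hi
      · rfl
      · exact (not_not.mp (mt (hzJ i).mp hi)).symm
    exact ⟨z, by rwa [hz_restrict], fun i hi => (hzJ i).mpr hi⟩
  · rintro ⟨w, hw, hwJ⟩
    refine ⟨_, hw, fun i => ?_⟩
    by_cases hi : i ∈ J <;> simp [hi, hwJ]

end MvPolynomial

theorem Ideal.one_mem_setOf_pow_mul_mem_iff_mem_radical {R : Type*} [CommSemiring R]
    (I : Ideal R) (h : R) :
    (1 : R) ∈ {p | ∃ N : ℕ, h ^ N * p ∈ I} ↔ h ∈ I.radical := by
  simp [Ideal.radical]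

/-- Over an algebraically closed field `K`, for `𝔞 = ⟨g_1,…,g_s⟩` and
`J ⊆ {1,…,r}`, the set `J` is an `𝔞`-face (i.e. `V(𝔞)` meets the torus orbit `T_J`)
iff `1 ∉ 𝔞_J : (∏_{i∈J} T_i)^∞`, where `𝔞_J` is generated by the `g_l` with the
variables outside `J` set to `0`. -/
theorem stmt_4
    {K : Type*} [Field K] [IsAlgClosed K] {r s : ℕ}
    (g : Fin s → MvPolynomial (Fin r) K)
    (J : Finset (Fin r)) :
    (∃ z : Fin r → K, (∀ l, eval z (g l) = 0) ∧ (∀ i, z i ≠ 0 ↔ i ∈ J)) ↔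
    ¬ (1 : MvPolynomial (Fin r) K) ∈
      {p : MvPolynomial (Fin r) K | ∃ N : ℕ, (∏ i ∈ J, X i) ^ N * p ∈
        Ideal.span (Set.range fun l =>
          (aeval fun i => if i ∈ J then (X i : MvPolynomial (Fin r) K) else 0) (g l))} := by
  rw [exists_eval_eq_zero_with_support_iff,
    Ideal.one_mem_setOf_pow_mul_mem_iff_mem_radical,
    ← exists_mem_zeroLocus_eval_ne_zero_iff (K := K), zeroLocus_span]
  simp only [Set.forall_mem_range, aeval_eq_eval, Set.mem_ofPred_eq]
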